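/- Assume ψ ≠ 0, each W i is invertible, and there is an index i0 with C i0 = 0 and W i0 = 1. Let A ∈ M be of the form A = α1 • S U1 + α2 • S U2 + α3 • S U3 + α4 • S U4 with U1, U2, U3, U4 pairwise distinct and α1, α2, α3, α4 nonzero reals, and suppose A² = 1 and A (W i ψ) = W i ψ for every i : Fin K. Then there exist V ∈ (Fin n → ZMod 2) and V1, V2 ∈ (Fin n → ZMod 2) with V1 ≠ V2, V1 ≠ 0, V2 ≠ 0, such that A = S V * T V1 V2 and ⟨C i, V⟩ = p i for every i. -/

import Mathlib

/-!
Since `S` is a linearly independent representation of the Boolean group `Fin n → ZMod 2`, it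
extends to an injective algebra map out of the real group algebra, so `A ^ 2 = 1` can be read off
coefficientwise there. After translating `U1` to `0`, comparing coefficients forces
`U1 + U2 + U3 + U4 = 0` and gives `α1 α2 + α3 α4 = α1 α3 + α2 α4 = α1 α4 + α2 α3 = 0`,
`∑ αᵢ ^ 2 = 1`, hence `αᵢ = ±1/2`. Each `S U` acts on `W i ψ` by the sign `(-1) ^ ⟨C i, U⟩`,
so `A (W i ψ) = W i ψ` says `∑ αᵢ (-1) ^ ⟨C i, Uᵢ⟩ = 1`. For `i = i0` this is `∑ αᵢ = 1`, so
exactly one coefficient, at `V` say, is `-1/2`; the other three points are then `V + V1`,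
`V + V2`, `V + V1 + V2`, which is `A = S V * T V1 V2`, and for general `i` the sign identity is
exactly `⟨C i, V⟩ = p i`.
-/

open AddMonoidAlgebra Function

namespace ZModModule

variable {G : Type*} [AddCommGroup G] [Module (ZMod 2) G]

lemma add_add_cancel_left (x y : G) : x + (x + y) = y := by
  rw [← add_assoc, add_self, zero_add]

lemma add_eq_zero_iff_eq {x y : G} : x + y = 0 ↔ x = y := by
  rw [add_eq_zero_iff_eq_neg, neg_eq_self]

end ZModModule

namespace AddMonoidAlgebra

section lift

variable {k G A : Type*} [CommSemiring k] [AddMonoid G] [Semiring A] [Algebra k A]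

theorem lift_injective {F : Multiplicative G →* A}
    (hF : LinearIndependent k fun g : G => F (.ofAdd g)) : Injective (lift k A G F) := by
  intro f g hfg
  rw [lift_apply, lift_apply] at hfg
  exact coeff_injective (hF hfg)

theorem sq_single_eq_one_of_linearIndependent {S : G → A} (hS₀ : S 0 = 1)
    (hS : ∀ U V, S (U + V) = S U * S V) (hind : LinearIndependent k S) {U₁ U₂ U₃ U₄ : G}
    {α₁ α₂ α₃ α₄ : k} (h : (α₁ • S U₁ + α₂ • S U₂ + α₃ • S U₃ + α₄ • S U₄) ^ 2 = 1) :
    (single U₁ α₁ + single U₂ α₂ + single U₃ α₃ + single U₄ α₄ : k[G]) ^ 2 = 1 := by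
  let F : Multiplicative G →* A :=
    { toFun := fun g => S g.toAdd, map_one' := hS₀, map_mul' := fun _ _ => hS _ _ }
  refine lift_injective (F := F) hind ?_
  simpa [F] using h

end lift

variable {G : Type*} [AddCommGroup G] [Module (ZMod 2) G]

theorem eq_add_of_sq_eq_one {a b c : G} (ha : a ≠ 0) (hb : b ≠ 0) (hc : c ≠ 0) (hab : a ≠ b)
    (hac : a ≠ c) {β₁ β₂ β₃ β₄ : ℝ} (h₁ : β₁ ≠ 0) (h₂ : β₂ ≠ 0)
    (h : (single 0 β₁ + single a β₂ + single b β₃ + single c β₄ : ℝ[G]) ^ 2 = 1) :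
    c = a + b := by
  classical
  by_contra hcab
  have hbac : b ≠ a + c := fun h => hcab (by rw [h, ZModModule.add_add_cancel_left])
  have hab' : a + b ≠ 0 := fun h => hab (ZModModule.add_eq_zero_iff_eq.mp h)
  have hac' : a + c ≠ 0 := fun h => hac (ZModModule.add_eq_zero_iff_eq.mp h)
  -- apart from `0 + a` and `a + 0`, no two support points sum to `a`
  have hcoeff := congrArg (fun f : ℝ[G] => f.coeff a) h
  simp only [add_comm, add_left_comm, sq, add_mul, coeff_add, Finsupp.coe_add, Pi.add_apply,
    coeff_single_mul_apply, coeff_single, ZModModule.neg_eq_self, ZModModule.add_self, ne_eq, ha.symm,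
    not_false_eq_true, Finsupp.single_eq_of_ne, hb.symm, hc.symm, Finsupp.single_eq_same, add_zero,
    add_eq_left, hb, add_eq_right, ha, hcab, Finsupp.single_eq_of_ne', hab'.symm, mul_zero, hc, hbac,
    hac'.symm, hab, hac, one_def] at hcoeff
  exact mul_ne_zero h₁ h₂ (by linarith)

theorem relations_of_sq_eq_one {a b : G} (ha : a ≠ 0) (hb : b ≠ 0) (hab : a ≠ b)
    {β₁ β₂ β₃ β₄ : ℝ}
    (h : (single 0 β₁ + single a β₂ + single b β₃ + single (a + b) β₄ : ℝ[G]) ^ 2 = 1) :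
    β₁ * β₂ + β₃ * β₄ = 0 ∧ β₁ * β₃ + β₂ * β₄ = 0 ∧ β₁ * β₄ + β₂ * β₃ = 0 ∧
      β₁ ^ 2 + β₂ ^ 2 + β₃ ^ 2 + β₄ ^ 2 = 1 := by
  classical
  have hab' : a + b ≠ 0 := fun h => hab (ZModModule.add_eq_zero_iff_eq.mp h)
  have hcoeff (x : G) := congrArg (fun f : ℝ[G] => f.coeff x) h
  have h₀ := hcoeff 0
  have h₁ := hcoeff a
  have h₂ := hcoeff b
  have h₃ := hcoeff (a + b)
  simp only [add_comm, add_left_comm, sq, add_mul, coeff_add, Finsupp.coe_add, Pi.add_apply,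
    coeff_single_mul_apply, coeff_single, ZModModule.neg_eq_self, add_zero, Finsupp.single_eq_same,
    ne_eq, hab, not_false_eq_true, Finsupp.single_eq_of_ne, left_eq_add, hb, ha,
    Finsupp.single_eq_of_ne', right_eq_add, add_eq_left, add_eq_right, hab', ZModModule.add_self,
    ha.symm, hb.symm, hab'.symm, one_def, ZModModule.add_add_cancel_left] at h₀ h₁ h₂ h₃
  refine ⟨?_, ?_, ?_, ?_⟩ <;> linarith

theorem sum_eq_zero_of_sq_eq_one {U₁ U₂ U₃ U₄ : G} (h₁₂ : U₁ ≠ U₂) (h₁₃ : U₁ ≠ U₃)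
    (h₁₄ : U₁ ≠ U₄) (h₂₃ : U₂ ≠ U₃) (h₂₄ : U₂ ≠ U₄) {α₁ α₂ α₃ α₄ : ℝ}
    (hα₁ : α₁ ≠ 0) (hα₂ : α₂ ≠ 0)
    (h : (single U₁ α₁ + single U₂ α₂ + single U₃ α₃ + single U₄ α₄ : ℝ[G]) ^ 2 = 1) :
    U₁ + U₂ + U₃ + U₄ = 0 ∧ α₁ * α₂ + α₃ * α₄ = 0 ∧ α₁ * α₃ + α₂ * α₄ = 0 ∧
      α₁ * α₄ + α₂ * α₃ = 0 ∧ α₁ ^ 2 + α₂ ^ 2 + α₃ ^ 2 + α₄ ^ 2 = 1 := by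
  have hU₁ : (single U₁ 1 : ℝ[G]) ^ 2 = 1 := by
    rw [sq, single_mul_single, ZModModule.add_self, one_mul, one_def]
  have htrans : (single 0 α₁ + single (U₁ + U₂) α₂ + single (U₁ + U₃) α₃ +
      single (U₁ + U₄) α₄ : ℝ[G]) ^ 2 = 1 := by
    have : (single 0 α₁ + single (U₁ + U₂) α₂ + single (U₁ + U₃) α₃ + single (U₁ + U₄) α₄ : ℝ[G]) =
        single U₁ 1 * (single U₁ α₁ + single U₂ α₂ + single U₃ α₃ + single U₄ α₄) := by
      simp only [mul_add, single_mul_single, one_mul, ZModModule.add_self]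
    rw [this, mul_pow, hU₁, h, one_mul]
  have hne (x y : G) (hxy : x ≠ y) : U₁ + x ≠ U₁ + y := fun h => hxy (add_left_cancel h)
  have hne₀ (x : G) (hx : U₁ ≠ x) : U₁ + x ≠ 0 := fun h => hx (ZModModule.add_eq_zero_iff_eq.mp h)
  have h₄ := eq_add_of_sq_eq_one (hne₀ _ h₁₂) (hne₀ _ h₁₃) (hne₀ _ h₁₄) (hne _ _ h₂₃) (hne _ _ h₂₄)
    hα₁ hα₂ htrans
  rw [h₄] at htrans
  refine ⟨?_, relations_of_sq_eq_one (hne₀ _ h₁₂) (hne₀ _ h₁₃) (hne _ _ h₂₃) htrans⟩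
  rw [add_comm U₁ U₂, ZModModule.add_add_add_cancel] at h₄
  rw [show U₁ + U₂ + U₃ + U₄ = U₁ + U₄ + (U₂ + U₃) by abel, h₄, ZModModule.add_self]

end AddMonoidAlgebra

theorem half_signs_of_relations {α₁ α₂ α₃ α₄ : ℝ} (hα₁ : α₁ ≠ 0) (hα₂ : α₂ ≠ 0)
    (e₁₂ : α₁ * α₂ + α₃ * α₄ = 0) (e₁₃ : α₁ * α₃ + α₂ * α₄ = 0) (e₁₄ : α₁ * α₄ + α₂ * α₃ = 0)
    (hsq : α₁ ^ 2 + α₂ ^ 2 + α₃ ^ 2 + α₄ ^ 2 = 1) (hsum : α₁ + α₂ + α₃ + α₄ = 1) :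
    (α₁ = -(1 / 2) ∧ α₂ = 1 / 2 ∧ α₃ = 1 / 2 ∧ α₄ = 1 / 2) ∨
      (α₁ = 1 / 2 ∧ α₂ = -(1 / 2) ∧ α₃ = 1 / 2 ∧ α₄ = 1 / 2) ∨
      (α₁ = 1 / 2 ∧ α₂ = 1 / 2 ∧ α₃ = -(1 / 2) ∧ α₄ = 1 / 2) ∨
      (α₁ = 1 / 2 ∧ α₂ = 1 / 2 ∧ α₃ = 1 / 2 ∧ α₄ = -(1 / 2)) := by
  have hα₃ : α₃ ≠ 0 := fun h => mul_ne_zero hα₁ hα₂ (by simpa [h] using e₁₂)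
  have h₂ : α₂ ^ 2 = α₁ ^ 2 :=
    mul_left_cancel₀ hα₃ (by linear_combination α₂ * e₁₄ - α₁ * e₁₃)
  have h₃ : α₃ ^ 2 = α₁ ^ 2 :=
    mul_left_cancel₀ hα₂ (by linear_combination α₃ * e₁₄ - α₁ * e₁₂)
  have h₄ : α₄ ^ 2 = α₁ ^ 2 :=
    mul_left_cancel₀ hα₂ (by linear_combination α₄ * e₁₃ - α₁ * e₁₂)
  have half : ∀ x : ℝ, x ^ 2 = 1 / 4 → x = 1 / 2 ∨ x = -(1 / 2) := fun x hx =>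
    eq_or_eq_neg_of_sq_eq_sq _ _ (by rw [hx]; norm_num)
  rcases half α₁ (by linarith) with rfl | rfl <;> rcases half α₂ (by linarith) with rfl | rfl <;>
    rcases half α₃ (by linarith) with rfl | rfl <;> rcases half α₄ (by linarith) with rfl | rfl <;>
    norm_num <;> linarith

namespace ZMod

def negOnePow (x : ZMod 2) : ℝ := if x = 0 then 1 else -1

@[simp]
lemma negOnePow_zero : negOnePow 0 = 1 := if_pos rfl

lemma negOnePow_mul_self (x : ZMod 2) : negOnePow x * negOnePow x = 1 := by
  unfold negOnePow; split_ifs <;> norm_num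

lemma eq_ite_of_negOnePow {x y z : ZMod 2}
    (h : negOnePow x + negOnePow y + negOnePow (x + y + z) - negOnePow z = 2) :
    z = if x + z = 0 ∧ y + z = 0 then 0 else 1 := by
  have cases : ∀ w : ZMod 2, w = 0 ∨ w = 1 := by decide
  unfold negOnePow at h
  rcases cases x with rfl | rfl <;> rcases cases y with rfl | rfl <;>
    rcases cases z with rfl | rfl <;> simp +decide at h ⊢ <;> norm_num at h

end ZMod

theorem LinearMap.apply_apply_eq_smul_of_mul_eq_smul_mul {R 𝕜 M : Type*} [Semiring R]
    [AddCommMonoid M] [Module R M] [Monoid 𝕜] [DistribMulAction 𝕜 M] [SMulCommClass R 𝕜 M]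
    {S W : Module.End R M} {ε : 𝕜} (hε : ε * ε = 1) (hWS : W * S = ε • (S * W)) {ψ : M}
    (hψ : S ψ = ψ) : S (W ψ) = ε • W ψ := by
  have h := congrArg (· ψ) hWS
  simp only [Module.End.mul_apply, LinearMap.smul_apply, hψ] at h
  conv_rhs => rw [h]
  rw [smul_smul, hε, one_smul]

theorem mul_half_smul_eq {G M : Type*} [AddCommGroup G] [Module (ZMod 2) G] [Ring M] [Algebra ℝ M]
    {S : G → M} (hS : ∀ U V, S (U + V) = S U * S V) (a b d : G) :
    S d * ((1 / 2 : ℝ) • (-1 + S (a + d) + S (b + d) + S (a + d + (b + d)))) =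
      (1 / 2 : ℝ) • (S a + S b + S (a + b + d) - S d) := by
  rw [mul_smul_comm]
  simp only [mul_add, mul_neg, mul_one, ← hS, add_comm, add_left_comm, ZModModule.add_self,
    add_zero]
  congr 1
  abel

theorem exists_eq_mul_half {n K : ℕ} {M : Type*} [Ring M] [Algebra ℝ M]
    {S : (Fin n → ZMod 2) → M} (hS : ∀ U V, S (U + V) = S U * S V) (C : Fin K → Fin n → ZMod 2)
    (a b c d : Fin n → ZMod 2) (hsum : a + b + c + d = 0) (hab : a ≠ b) (had : a ≠ d)
    (hbd : b ≠ d) {A : M} (hA : A = (1 / 2 : ℝ) • (S a + S b + S c - S d))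
    (hC : ∀ i, ZMod.negOnePow (C i ⬝ᵥ a) + ZMod.negOnePow (C i ⬝ᵥ b) +
      ZMod.negOnePow (C i ⬝ᵥ c) - ZMod.negOnePow (C i ⬝ᵥ d) = 2) :
    ∃ V V₁ V₂ : Fin n → ZMod 2, V₁ ≠ V₂ ∧ V₁ ≠ 0 ∧ V₂ ≠ 0 ∧
      A = S V * ((1 / 2 : ℝ) • (-1 + S V₁ + S V₂ + S (V₁ + V₂))) ∧
      ∀ i, C i ⬝ᵥ V = if C i ⬝ᵥ V₁ = 0 ∧ C i ⬝ᵥ V₂ = 0 then 0 else 1 := by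
  obtain rfl : c = a + b + d := by
    rw [← ZModModule.add_eq_zero_iff_eq, ← hsum]; abel
  refine ⟨d, a + d, b + d, fun h => hab (add_right_cancel h),
    fun h => had (ZModModule.add_eq_zero_iff_eq.mp h),
    fun h => hbd (ZModModule.add_eq_zero_iff_eq.mp h), by rw [hA, mul_half_smul_eq hS], fun i => ?_⟩
  have h := hC i
  simp only [dotProduct_add] at h ⊢
  exact ZMod.eq_ite_of_negOnePow h

theorem stmt_11_general {n K : ℕ}
    {H : Type*} [AddCommGroup H] [Module ℂ H]
    (S : (Fin n → ZMod 2) → Module.End ℂ H)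
    (hS0 : S 0 = 1)
    (hSmul : ∀ U V : Fin n → ZMod 2, S (U + V) = S U * S V)
    (hind : LinearIndependent ℝ S)
    (ψ : H) (hψ : ∀ V : Fin n → ZMod 2, S V ψ = ψ) (hψ0 : ψ ≠ 0)
    (C : Fin K → (Fin n → ZMod 2))
    (W : Fin K → Module.End ℂ H)
    (hW : ∀ (i : Fin K) (V : Fin n → ZMod 2),
      W i * S V = (if (∑ k, C i k * V k) = 0 then (1 : ℝ) else -1) • (S V * W i))
    (hWinv : ∀ i : Fin K, IsUnit (W i))
    (i0 : Fin K) (hC0 : C i0 = 0)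
    (U1 U2 U3 U4 : Fin n → ZMod 2)
    (h12 : U1 ≠ U2) (h13 : U1 ≠ U3) (h14 : U1 ≠ U4)
    (h23 : U2 ≠ U3) (h24 : U2 ≠ U4)
    (α1 α2 α3 α4 : ℝ)
    (hα1 : α1 ≠ 0) (hα2 : α2 ≠ 0)
    (A : Module.End ℂ H)
    (hA : A = α1 • S U1 + α2 • S U2 + α3 • S U3 + α4 • S U4)
    (hA2 : A ^ 2 = 1)
    (hstab : ∀ i : Fin K, A (W i ψ) = W i ψ) :
    ∃ V V1 V2 : Fin n → ZMod 2,
      V1 ≠ V2 ∧ V1 ≠ 0 ∧ V2 ≠ 0 ∧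
      A = S V * ((1 / 2 : ℝ) • (-1 + S V1 + S V2 + S (V1 + V2))) ∧
      ∀ i : Fin K,
        (∑ k, C i k * V k) =
          (if (∑ k, C i k * V1 k) = 0 ∧ (∑ k, C i k * V2 k) = 0
            then (0 : ZMod 2) else 1) := by
  have hSWψ (i : Fin K) (V : Fin n → ZMod 2) : S V (W i ψ) = ZMod.negOnePow (C i ⬝ᵥ V) • W i ψ :=
    LinearMap.apply_apply_eq_smul_of_mul_eq_smul_mul (ZMod.negOnePow_mul_self _) (hW i V) (hψ V)
  have heig (i : Fin K) : α1 * ZMod.negOnePow (C i ⬝ᵥ U1) + α2 * ZMod.negOnePow (C i ⬝ᵥ U2) +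
      α3 * ZMod.negOnePow (C i ⬝ᵥ U3) + α4 * ZMod.negOnePow (C i ⬝ᵥ U4) = 1 := by
    have hWψ : W i ψ ≠ 0 :=
      (map_ne_zero_iff _ ((Module.End.isUnit_iff _).mp (hWinv i)).injective).mpr hψ0
    have h := hstab i
    simp only [hA, LinearMap.add_apply, LinearMap.smul_apply, hSWψ, smul_smul, ← add_smul] at h
    exact smul_left_injective ℝ hWψ (h.trans (one_smul ℝ _).symm)
  have hsum : α1 + α2 + α3 + α4 = 1 := by simpa [hC0] using heig i0
  obtain ⟨hzero, e12, e13, e14, hsq⟩ := sum_eq_zero_of_sq_eq_one h12 h13 h14 h23 h24 hα1 hα2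
    (sq_single_eq_one_of_linearIndependent hS0 hSmul hind (hA ▸ hA2))
  rcases half_signs_of_relations hα1 hα2 e12 e13 e14 hsq hsum with
    ⟨rfl, rfl, rfl, rfl⟩ | ⟨rfl, rfl, rfl, rfl⟩ | ⟨rfl, rfl, rfl, rfl⟩ | ⟨rfl, rfl, rfl, rfl⟩
  · exact exists_eq_mul_half hSmul C U2 U3 U4 U1 (by rw [← hzero]; abel) h23 h12.symm h13.symm
      (by rw [hA]; module) fun i => by linarith [heig i]
  · exact exists_eq_mul_half hSmul C U1 U3 U4 U2 (by rw [← hzero]; abel) h13 h12 h23.symm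
      (by rw [hA]; module) fun i => by linarith [heig i]
  · exact exists_eq_mul_half hSmul C U1 U2 U4 U3 (by rw [← hzero]; abel) h12 h13 h23
      (by rw [hA]; module) fun i => by linarith [heig i]
  · exact exists_eq_mul_half hSmul C U1 U2 U3 U4 hzero h12 h14 h24
      (by rw [hA]; module) fun i => by linarith [heig i]

theorem stmt_11 {n K : ℕ} (hn : 1 ≤ n) (hK : 1 ≤ K)
    {H : Type*} [AddCommGroup H] [Module ℂ H]
    (S : (Fin n → ZMod 2) → Module.End ℂ H)
    (hS0 : S 0 = 1)
    (hSmul : ∀ U V : Fin n → ZMod 2, S (U + V) = S U * S V)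
    (hind : LinearIndependent ℝ S)
    (ψ : H) (hψ : ∀ V : Fin n → ZMod 2, S V ψ = ψ) (hψ0 : ψ ≠ 0)
    (C : Fin K → (Fin n → ZMod 2))
    (W : Fin K → Module.End ℂ H)
    (hW : ∀ (i : Fin K) (V : Fin n → ZMod 2),
      W i * S V = (if (∑ k, C i k * V k) = 0 then (1 : ℝ) else -1) • (S V * W i))
    (hWinv : ∀ i : Fin K, IsUnit (W i))
    (i0 : Fin K) (hC0 : C i0 = 0) (hW0 : W i0 = 1)
    (U1 U2 U3 U4 : Fin n → ZMod 2)
    (h12 : U1 ≠ U2) (h13 : U1 ≠ U3) (h14 : U1 ≠ U4)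
    (h23 : U2 ≠ U3) (h24 : U2 ≠ U4) (h34 : U3 ≠ U4)
    (α1 α2 α3 α4 : ℝ)
    (hα1 : α1 ≠ 0) (hα2 : α2 ≠ 0) (hα3 : α3 ≠ 0) (hα4 : α4 ≠ 0)
    (A : Module.End ℂ H)
    (hA : A = α1 • S U1 + α2 • S U2 + α3 • S U3 + α4 • S U4)
    (hA2 : A ^ 2 = 1)
    (hstab : ∀ i : Fin K, A (W i ψ) = W i ψ) :
    ∃ V V1 V2 : Fin n → ZMod 2,
      V1 ≠ V2 ∧ V1 ≠ 0 ∧ V2 ≠ 0 ∧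
      A = S V * ((1 / 2 : ℝ) • (-1 + S V1 + S V2 + S (V1 + V2))) ∧
      ∀ i : Fin K,
        (∑ k, C i k * V k) =
          (if (∑ k, C i k * V1 k) = 0 ∧ (∑ k, C i k * V2 k) = 0
            then (0 : ZMod 2) else 1) :=
  stmt_11_general S hS0 hSmul hind ψ hψ hψ0 C W hW hWinv i0 hC0 U1 U2 U3 U4 h12 h13 h14 h23 h24 α1
    α2 α3 α4 hα1 hα2 A hA hA2 hstab
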